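/- Fix a mutation measure ν ∈ H⁺ and a selective cost S with Lipschitz constant K, and suppose that inf{S(δ_m) : m ∈ ℳ} > 0. Then there exists U > 0 such that for every u ∈ [0,U] there is a measure ρ ∈ H⁺ satisfying u·ν(A) = ∫_A F_ρ dρ for every Borel set A ⊆ ℳ (i.e. ρ is a finite equilibrium for the dynamics with mutation measure u·ν). -/

import Mathlib

open MeasureTheory Set Filter
open scoped ENNReal NNReal

noncomputable section

namespace MSEW

/-- `LipLE dE f c` : the bounded-Lipschitz norm of `f`, namely
`sup_x |f x| + sup_{x ≠ y} |f x - f y| / dE x y`, is at most `c`;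
phrased without suprema, relative to an abstract distance function `dE`. -/
def LipLE {E : Type*} (dE : E → E → ℝ) (f : E → ℝ) (c : ℝ) : Prop :=
  ∃ a b : ℝ, 0 ≤ a ∧ 0 ≤ b ∧ a + b ≤ c ∧ (∀ x, |f x| ≤ a) ∧
    ∀ x y, |f x - f y| ≤ b * dE x y

/-- Integral of `f : E → ℝ` against a finite integer-valued measure, represented
as the multiset of its atoms (a genotype). -/
def gInt {E : Type*} (g : Multiset E) (f : E → ℝ) : ℝ := (g.map f).sum

/-- The mass `g(A)` that a genotype `g` assigns to a set `A`. -/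
def gMass {E : Type*} (g : Multiset E) (A : Set E) : ℝ := gInt g (A.indicator 1)

/-- The σ-algebra on genotypes generated by the counting functionals
`g ↦ g(A)` for measurable `A`. -/
instance multisetMeasurableSpace {E : Type*} [MeasurableSpace E] :
    MeasurableSpace (Multiset E) :=
  MeasurableSpace.generateFrom
    { s | ∃ (A : Set E) (n : ℕ), MeasurableSet A ∧ s = { g : Multiset E | gMass g A = n } }

/-- Wasserstein distance between two (finite) measures: the supremum of
differences of integrals of test functions of bounded-Lipschitz norm at most one. -/
def wasDist {E : Type*} [MeasurableSpace E] (dE : E → E → ℝ) (P Q : Measure E) : ℝ :=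
  sSup { r | ∃ f : E → ℝ, LipLE dE f 1 ∧ r = |∫ x, f x ∂P - ∫ x, f x ∂Q| }

/-- Wasserstein norm of a finite signed measure, `sup { |∫ f dπ| : ‖f‖_Lip ≤ 1 }`. -/
def wasNorm {E : Type*} [MeasurableSpace E] (dE : E → E → ℝ) (π : SignedMeasure E) : ℝ :=
  wasDist dE π.toJordanDecomposition.posPart π.toJordanDecomposition.negPart

/-- The Wasserstein metric on genotypes, `d(g,h) = ‖g - h‖_Was`. -/
def dG {M : Type*} [MetricSpace M] (g h : Multiset M) : ℝ :=
  sSup { r | ∃ f : M → ℝ, LipLE dist f 1 ∧ r = |gInt g f - gInt h f| }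

/-- The measure on `E` associated with a genotype: the finite sum of Dirac masses. -/
def genMeasure {E : Type*} [MeasurableSpace E] (g : Multiset E) : Measure E :=
  (g.map fun x => Measure.dirac x).sum

/-- The intensity measure `μP` of a law `P` on genotypes: `μP(A) = ∫ g(A) dP(g)`. -/
def intensity {E : Type*} [MeasurableSpace E] (P : Measure (Multiset E)) : Measure E :=
  P.bind genMeasure

/-- The law `Π_π` of a Poisson random measure with intensity `π`:
`Π_π[F] = e^{-π(univ)} ∑_k (1/k!) ∫ F(δ_{x₁}+⋯+δ_{x_k}) dπ^{⊗k}`. -/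
def poissonLaw {M : Type*} [MeasurableSpace M] (π : Measure M) : Measure (Multiset M) :=
  ENNReal.ofReal (Real.exp (-(π Set.univ).toReal)) •
    Measure.sum fun k : ℕ =>
      ((Nat.factorial k : ℝ≥0∞))⁻¹ •
        Measure.map (fun x : Fin k → M => ∑ i, ({x i} : Multiset M))
          (Measure.pi fun _ : Fin k => π)

/-- A selective cost with Lipschitz constant `K`: a Borel function
`S : 𝒢 → [0,∞)` with `S(0) = 0`, monotone under adding mutations, and
Lipschitz with constant `K` for the Wasserstein metric on genotypes. -/
structure IsSelectiveCost {M : Type*} [MetricSpace M] [MeasurableSpace M]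
    (S : Multiset M → ℝ) (K : ℝ) : Prop where
  measurable : Measurable S
  nonneg : ∀ g, 0 ≤ S g
  map_zero : S 0 = 0
  mono : ∀ g h, S g ≤ S (g + h)
  lip : ∀ g h, |S g - S h| ≤ K * dG g h

/-- `F_π(x) = E[S(X^π + δ_x) - S(X^π)]`. -/
def Fcost {M : Type*} [MeasurableSpace M] (S : Multiset M → ℝ) (π : Measure M) (x : M) : ℝ :=
  ∫ g, (S (g + {x}) - S g) ∂(poissonLaw π)

/-- The kernel `K_ρ(m,m') = E[S(X^ρ+δ_m+δ_{m'}) - S(X^ρ+δ_{m'}) - S(X^ρ+δ_m) + S(X^ρ)]`. -/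
def Kker {M : Type*} [MeasurableSpace M] (S : Multiset M → ℝ) (ρ : Measure M)
    (m m' : M) : ℝ :=
  ∫ g, (S (g + {m} + {m'}) - S (g + {m'}) - S (g + {m}) + S g) ∂(poissonLaw ρ)

/-- The operator `D`: `Dπ` is the measure with density `F_π` with respect to `π`. -/
def Dop {M : Type*} [MeasurableSpace M] (S : Multiset M → ℝ) (ρ : Measure M) : Measure M :=
  ρ.withDensity fun x => ENNReal.ofReal (Fcost S ρ x)

/-- Concavity of a selective cost. -/
def ConcaveCost {M : Type*} (S : Multiset M → ℝ) : Prop :=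
  ∀ g h k : Multiset M, S (g + h + k) - S (g + h) ≤ S (g + k) - S g

/-- A solution of the mutation–selection dynamics
`ρ_t(A) = ρ₀(A) + t·ν(A) - ∫₀ᵗ (Dρ_s)(A) ds`: a `‖⋅‖_Was`-continuous curve of
finite nonnegative measures satisfying the integral equation for `t ≥ 0`. -/
def IsSolution {M : Type*} [MetricSpace M] [MeasurableSpace M]
    (S : Multiset M → ℝ) (ν ρ₀ : Measure M) (ρ : ℝ → Measure M) : Prop :=
  (∀ t, IsFiniteMeasure (ρ t)) ∧ ρ 0 = ρ₀ ∧
  (∀ t, 0 ≤ t → ∀ ε > (0:ℝ), ∃ δ > (0:ℝ), ∀ s, 0 ≤ s → |s - t| < δ →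
     wasDist dist (ρ s) (ρ t) < ε) ∧
  ∀ t, 0 ≤ t → ∀ A : Set M, MeasurableSet A →
    ((ρ t) A).toReal = (ρ₀ A).toReal + t * (ν A).toReal -
      ∫ s in (0:ℝ)..t, ((Dop S (ρ s)) A).toReal

/-- The mutation operator `𝔐_n`: add an independent Poisson cloud of new
mutations with intensity `ν/n`. -/
def mutOp {M : Type*} [MeasurableSpace M] (ν : Measure M) (n : ℕ)
    (P : Measure (Multiset M)) : Measure (Multiset M) :=
  Measure.map (fun p : Multiset M × Multiset M => p.1 + p.2)
    (P.prod (poissonLaw (((n : ℝ≥0∞))⁻¹ • ν)))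

/-- The selection operator `𝔖_n`: reweight by `e^{-S/n}` and renormalize. -/
def selOp {M : Type*} [MeasurableSpace M] (S : Multiset M → ℝ) (n : ℕ)
    (P : Measure (Multiset M)) : Measure (Multiset M) :=
  (∫⁻ g, ENNReal.ofReal (Real.exp (-S g / (n : ℝ))) ∂P)⁻¹ •
    P.withDensity fun g => ENNReal.ofReal (Real.exp (-S g / (n : ℝ)))

/-- The complete Poissonization operator `𝔓P = Π_{μP}`. -/
def poisOp {M : Type*} [MeasurableSpace M] (P : Measure (Multiset M)) :
    Measure (Multiset M) :=
  poissonLaw (intensity P)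

/-- Restriction `g_B` of a genotype to a set: `g_B(A) = g(A ∩ B)`. -/
def restrictMS {M : Type*} (g : Multiset M) (B : Set M) : Multiset M :=
  @Multiset.filter M (· ∈ B) (Classical.decPred _) g

/-- The random segregating set determined by a jointly measurable indicator. -/
def segSet {Ω M : Type*} (χ : Ω × M → Bool) (ω : Ω) : Set M :=
  { x | χ (ω, x) = true }

/-- The recombination operator `ℛ`. -/
def recOp {M Ω : Type*} [MeasurableSpace M] [MeasurableSpace Ω]
    (Pr : Measure Ω) (R : Ω → Set M) (P : Measure (Multiset M)) : Measure (Multiset M) :=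
  Measure.map (fun q : Ω × Multiset M × Multiset M =>
      restrictMS q.2.1 (R q.1) + restrictMS q.2.2 ((R q.1)ᶜ))
    (Pr.prod (P.prod P))

/-- Symmetry of a recombination mechanism: the segregating set and its
complement are identically distributed as random sets. -/
def IsSymmetricMech {M Ω : Type*} [MeasurableSpace M] [MeasurableSpace Ω]
    (Pr : Measure Ω) (R : Ω → Set M) : Prop :=
  ∀ lam : Measure M, IsFiniteMeasure lam → ∀ (p : ℕ) (B : Fin p → Set M),
    (∀ i, MeasurableSet (B i)) →
    Measure.map (fun ω => fun i => (lam (B i ∩ R ω)).toReal) Pr =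
    Measure.map (fun ω => fun i => (lam (B i ∩ (R ω)ᶜ)).toReal) Pr

/-- `(ℛ, λ)` is shattering with constant `α`:
`λ(A)³ ≤ 2α·E[λ(A ∩ R)·λ(A ∩ Rᶜ)]` for every Borel `A`. -/
def IsShattering {M Ω : Type*} [MeasurableSpace M] [MeasurableSpace Ω]
    (Pr : Measure Ω) (R : Ω → Set M) (lam : Measure M) (α : ℝ) : Prop :=
  ∀ A : Set M, MeasurableSet A →
    (lam A).toReal ^ 3 ≤
      2 * α * ∫ ω, (lam (A ∩ R ω)).toReal * (lam (A ∩ (R ω)ᶜ)).toReal ∂Pr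


/-! ### Auxiliary lemmas -/

section GIntAux

variable {E : Type*}

theorem gInt_zero (f : E → ℝ) : gInt (0 : Multiset E) f = 0 := by simp [gInt]

theorem gInt_add (g h : Multiset E) (f : E → ℝ) :
    gInt (g + h) f = gInt g f + gInt h f := by simp [gInt]

theorem gInt_single (x : E) (f : E → ℝ) : gInt ({x} : Multiset E) f = f x := by simp [gInt]

theorem gInt_cons (a : E) (g : Multiset E) (f : E → ℝ) :
    gInt (a ::ₘ g) f = f a + gInt g f := by simp [gInt]

theorem gInt_finset_sum {ι : Type*} (s : Finset ι) (g : ι → Multiset E) (f : E → ℝ) :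
    gInt (∑ i ∈ s, g i) f = ∑ i ∈ s, gInt (g i) f := by
  classical
  induction s using Finset.induction with
  | empty => simp [gInt]
  | insert _ _ h ih => rw [Finset.sum_insert h, gInt_add, ih, Finset.sum_insert h]

theorem gMass_eq_natCast (g : Multiset E) (A : Set E) : ∃ n : ℕ, gMass g A = n := by
  classical
  induction g using Multiset.induction with
  | empty => exact ⟨0, by simp [gMass, gInt]⟩
  | cons a g ih =>
    obtain ⟨n, hn⟩ := ih
    have hc : gMass (a ::ₘ g) A = A.indicator 1 a + gMass g A := by
      simp [gMass, gInt_cons]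
    by_cases ha : a ∈ A
    · exact ⟨n + 1, by rw [hc, Set.indicator_of_mem ha, hn, Pi.one_apply]; push_cast; ring⟩
    · exact ⟨n, by rw [hc, Set.indicator_of_notMem ha, hn]; simp⟩

theorem measurable_gMass [MeasurableSpace E] {A : Set E} (hA : MeasurableSet A) :
    Measurable fun g : Multiset E => gMass g A := by
  intro T hT
  have : (fun g : Multiset E => gMass g A) ⁻¹' T =
      ⋃ n ∈ {n : ℕ | (n : ℝ) ∈ T}, {g : Multiset E | gMass g A = n} := by
    ext g
    simp only [Set.mem_preimage, Set.mem_iUnion, Set.mem_setOf_eq, exists_prop]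
    constructor
    · intro hg
      obtain ⟨n, hn⟩ := gMass_eq_natCast g A
      exact ⟨n, by rw [hn] at hg; exact hg, hn⟩
    · rintro ⟨n, hnT, hn⟩
      rw [hn]; exact hnT
  rw [this]
  exact MeasurableSet.biUnion (Set.to_countable _) fun n _ =>
    MeasurableSpace.measurableSet_generateFrom ⟨A, n, hA, rfl⟩

theorem measurable_sumMap [MeasurableSpace E] (k : ℕ) :
    Measurable fun x : Fin k → E => ∑ i, ({x i} : Multiset E) := by
  apply measurable_generateFrom
  rintro t ⟨A, n, hA, rfl⟩
  have hset : (fun x : Fin k → E => ∑ i, ({x i} : Multiset E)) ⁻¹'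
      {g : Multiset E | gMass g A = n} =
      (fun x : Fin k → E => ∑ i, A.indicator (1 : E → ℝ) (x i)) ⁻¹' {((n : ℕ) : ℝ)} := by
    ext x
    simp [gMass, gInt_finset_sum, gInt_single]
  rw [hset]
  have hm : Measurable fun x : Fin k → E => ∑ i, A.indicator (1 : E → ℝ) (x i) :=
    Finset.measurable_sum _ fun i _ =>
      (measurable_one.indicator hA).comp (measurable_pi_apply i)
  exact hm (measurableSet_singleton _)

theorem measurable_addSingle [MeasurableSpace E] :
    Measurable fun p : Multiset E × E => p.1 + ({p.2} : Multiset E) := by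
  apply measurable_generateFrom
  rintro t ⟨A, n, hA, rfl⟩
  have hset : (fun p : Multiset E × E => p.1 + ({p.2} : Multiset E)) ⁻¹'
      {g : Multiset E | gMass g A = n} =
      (fun p : Multiset E × E => gMass p.1 A + A.indicator (1 : E → ℝ) p.2) ⁻¹'
        {((n : ℕ) : ℝ)} := by
    ext p
    simp [gMass, gInt_add, gInt_single]
  rw [hset]
  have hm : Measurable fun p : Multiset E × E =>
      gMass p.1 A + A.indicator (1 : E → ℝ) p.2 :=
    ((measurable_gMass hA).comp measurable_fst).add
      ((measurable_one.indicator hA).comp measurable_snd)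
  exact hm (measurableSet_singleton _)

end GIntAux

section DGAux

variable {N : Type*} [MetricSpace N]

theorem dG_addSingle_le (g : Multiset N) (x : N) : dG (g + {x}) g ≤ 1 := by
  apply Real.sSup_le _ zero_le_one
  rintro r ⟨f, ⟨a, b, ha, hb, hab, hfa, _⟩, rfl⟩
  rw [gInt_add, gInt_single]
  have : |gInt g f + f x - gInt g f| = |f x| := by congr 1; ring
  rw [this]
  exact le_trans (hfa x) (le_trans (le_add_of_nonneg_right hb) hab)

theorem dG_addSingle_nonneg (g : Multiset N) (x : N) : 0 ≤ dG (g + {x}) g := by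
  have hmem : (0 : ℝ) ∈ {r | ∃ f : N → ℝ, LipLE dist f 1 ∧
      r = |gInt (g + {x}) f - gInt g f|} := by
    refine ⟨fun _ => 0, ⟨0, 0, le_refl _, le_refl _, by norm_num,
      fun _ => by simp, fun _ _ => by simp⟩, ?_⟩
    simp [gInt]
  refine le_csSup ⟨1, ?_⟩ hmem
  rintro r ⟨f, ⟨a, b, ha, hb, hab, hfa, _⟩, rfl⟩
  rw [gInt_add, gInt_single]
  have : |gInt g f + f x - gInt g f| = |f x| := by congr 1; ring
  rw [this]
  exact le_trans (hfa x) (le_trans (le_add_of_nonneg_right hb) hab)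

end DGAux


section PoissonAux

theorem ennreal_tsum_factorial (x : ℝ) (hx : 0 ≤ x) :
    ∑' k : ℕ, ((Nat.factorial k : ℝ≥0∞))⁻¹ * (ENNReal.ofReal x) ^ k =
      ENNReal.ofReal (Real.exp x) := by
  have hterm : ∀ k : ℕ, ((Nat.factorial k : ℝ≥0∞))⁻¹ * (ENNReal.ofReal x) ^ k
      = ENNReal.ofReal (x ^ k / Nat.factorial k) := by
    intro k
    rw [mul_comm, ← div_eq_mul_inv, ENNReal.ofReal_div_of_pos (by positivity),
      ENNReal.ofReal_pow hx, ENNReal.ofReal_natCast]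
  rw [tsum_congr hterm,
    ← ENNReal.ofReal_tsum_of_nonneg (fun k => by positivity)
      (Real.summable_pow_div_factorial x)]
  congr 1
  rw [Real.exp_eq_exp_ℝ, NormedSpace.exp_eq_tsum_div]

variable {α : Type*} [MeasurableSpace α]

theorem lintegral_fin_prod {μ : Measure α} [SigmaFinite μ] :
    ∀ {n : ℕ} (w : Fin n → α → ℝ≥0∞), (∀ i, Measurable (w i)) →
      ∫⁻ y : Fin n → α, ∏ i, w i (y i) ∂(Measure.pi fun _ => μ) = ∏ i, ∫⁻ x, w i x ∂μ := by
  intro n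
  induction n with
  | zero =>
    intro w _
    simp [lintegral_one, Measure.pi_univ]
  | succ n ih =>
    intro w hw
    have hmeas : Measurable fun y : Fin (n + 1) → α => ∏ i, w i (y i) :=
      Finset.measurable_prod _ fun i _ => (hw i).comp (measurable_pi_apply i)
    have mp := (measurePreserving_piFinSuccAbove (fun _ : Fin (n + 1) => μ) 0).symm
    calc ∫⁻ y : Fin (n + 1) → α, ∏ i, w i (y i) ∂(Measure.pi fun _ => μ)
        = ∫⁻ z : α × (Fin n → α), ∏ i, w i
            ((MeasurableEquiv.piFinSuccAbove (fun _ : Fin (n + 1) => α) 0).symm z i)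
            ∂(μ.prod (Measure.pi fun _ => μ)) := (mp.lintegral_comp hmeas).symm
      _ = ∫⁻ z : α × (Fin n → α), w 0 z.1 * ∏ i : Fin n, w i.succ (z.2 i)
            ∂(μ.prod (Measure.pi fun _ => μ)) := by
          refine lintegral_congr fun z => ?_
          have hz : ((MeasurableEquiv.piFinSuccAbove (fun _ : Fin (n + 1) => α) 0).symm z)
              = Fin.insertNth 0 z.1 z.2 := by
            simp [MeasurableEquiv.piFinSuccAbove_symm_apply, Fin.insertNthEquiv]
          rw [hz, Fin.prod_univ_succ, Fin.insertNth_apply_same]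
          refine congrArg _ (Finset.prod_congr rfl fun j _ => ?_)
          rw [← Fin.zero_succAbove j, Fin.insertNth_apply_succAbove]
      _ = (∫⁻ x, w 0 x ∂μ) * ∫⁻ z : Fin n → α, ∏ i : Fin n, w i.succ (z i)
            ∂(Measure.pi fun _ => μ) := by
          exact lintegral_prod_mul (hw 0).aemeasurable
            (Finset.measurable_prod _ fun (i : Fin n) _ =>
              (hw i.succ).comp (measurable_pi_apply i)).aemeasurable
      _ = ∏ i, ∫⁻ x, w i x ∂μ := by
          rw [ih (fun i => w i.succ) fun i => hw i.succ, Fin.prod_univ_succ]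

theorem pi_withDensity_eq {μ : Measure α} [SigmaFinite μ] {w : α → ℝ≥0∞} (hw : Measurable w)
    [SigmaFinite (μ.withDensity w)] (k : ℕ) :
    Measure.pi (fun _ : Fin k => μ.withDensity w) =
      (Measure.pi fun _ : Fin k => μ).withDensity fun y => ∏ i, w (y i) := by
  refine Measure.pi_eq fun s hs => ?_
  rw [withDensity_apply _ (MeasurableSet.univ_pi hs),
    ← lintegral_indicator (MeasurableSet.univ_pi hs)]
  have hind : ∀ y : Fin k → α, (Set.pi Set.univ s).indicator (fun y => ∏ i, w (y i)) y
      = ∏ i, (s i).indicator w (y i) := by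
    intro y
    by_cases hy : y ∈ Set.pi Set.univ s
    · rw [Set.indicator_of_mem hy]
      exact Finset.prod_congr rfl fun i _ =>
        (Set.indicator_of_mem (hy i (Set.mem_univ i)) w).symm
    · rw [Set.indicator_of_notMem hy]
      have : ∃ i, y i ∉ s i := by simpa [Set.mem_pi] using hy
      obtain ⟨i, hi⟩ := this
      exact (Finset.prod_eq_zero (Finset.mem_univ i)
        (by rw [Set.indicator_of_notMem hi])).symm
  rw [lintegral_congr hind,
    lintegral_fin_prod (fun i => (s i).indicator w) fun i => hw.indicator (hs i)]
  exact Finset.prod_congr rfl fun i _ => by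
    rw [lintegral_indicator (hs i), ← withDensity_apply _ (hs i)]

theorem lintegral_poissonLaw (π : Measure α) {f : Multiset α → ℝ≥0∞} (hf : Measurable f) :
    ∫⁻ g, f g ∂poissonLaw π = ENNReal.ofReal (Real.exp (-(π Set.univ).toReal)) *
      ∑' k : ℕ, ((Nat.factorial k : ℝ≥0∞))⁻¹ *
        ∫⁻ x : Fin k → α, f (∑ i, ({x i} : Multiset α)) ∂(Measure.pi fun _ => π) := by
  rw [poissonLaw, lintegral_smul_measure, lintegral_sum_measure]
  congr 1
  refine tsum_congr fun k => ?_
  rw [lintegral_smul_measure, lintegral_map hf (measurable_sumMap k), smul_eq_mul]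

theorem poissonLaw_univ (π : Measure α) [IsFiniteMeasure π] :
    poissonLaw π Set.univ = 1 := by
  rw [← lintegral_one, lintegral_poissonLaw π measurable_const]
  have hk : ∀ k : ℕ, ∫⁻ _x : Fin k → α, (1 : ℝ≥0∞) ∂(Measure.pi fun _ => π)
      = (ENNReal.ofReal (π Set.univ).toReal) ^ k := by
    intro k
    rw [lintegral_one, Measure.pi_univ, Finset.prod_const,
      ENNReal.ofReal_toReal (measure_ne_top π _)]
    simp
  rw [tsum_congr fun k => by rw [hk k],
    ennreal_tsum_factorial _ ENNReal.toReal_nonneg,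
    ← ENNReal.ofReal_mul (le_of_lt (Real.exp_pos _)), ← Real.exp_add]
  simp

theorem isProbability_poissonLaw (π : Measure α) [IsFiniteMeasure π] :
    IsProbabilityMeasure (poissonLaw π) := ⟨poissonLaw_univ π⟩

end PoissonAux


section RealAux

theorem fin_prod_diff_le {H D : ℝ} (hH : 0 ≤ H) (hD : 0 ≤ D) :
    ∀ {k : ℕ} (a b : Fin k → ℝ), (∀ i, 0 ≤ a i) → (∀ i, a i ≤ H) → (∀ i, 0 ≤ b i) →
      (∀ i, b i ≤ H) → (∀ i, |a i - b i| ≤ D) →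
      |∏ i, a i - ∏ i, b i| ≤ k * D * H ^ (k - 1) := by
  intro k
  induction k with
  | zero => intro a b _ _ _ _ _; simp
  | succ k ih =>
    intro a b ha0 haH hb0 hbH hab
    have ihk := ih (fun i => a i.succ) (fun i => b i.succ) (fun i => ha0 i.succ)
      (fun i => haH i.succ) (fun i => hb0 i.succ) (fun i => hbH i.succ) (fun i => hab i.succ)
    have hQ0 : 0 ≤ ∏ i : Fin k, b i.succ := Finset.prod_nonneg fun i _ => hb0 i.succ
    have hQH : ∏ i : Fin k, b i.succ ≤ H ^ k := by
      calc ∏ i : Fin k, b i.succ ≤ ∏ _i : Fin k, H :=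
            Finset.prod_le_prod (fun i _ => hb0 i.succ) (fun i _ => hbH i.succ)
        _ = H ^ k := by rw [Finset.prod_const, Finset.card_univ, Fintype.card_fin]
    rw [Fin.prod_univ_succ a, Fin.prod_univ_succ b]
    have key : |a 0 * ∏ i : Fin k, a i.succ - b 0 * ∏ i : Fin k, b i.succ|
        ≤ |a 0| * |∏ i : Fin k, a i.succ - ∏ i : Fin k, b i.succ|
          + |a 0 - b 0| * |∏ i : Fin k, b i.succ| := by
      have : a 0 * ∏ i : Fin k, a i.succ - b 0 * ∏ i : Fin k, b i.succ
          = a 0 * (∏ i : Fin k, a i.succ - ∏ i : Fin k, b i.succ)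
            + (a 0 - b 0) * ∏ i : Fin k, b i.succ := by ring
      rw [this]
      exact le_trans (abs_add_le _ _) (by rw [abs_mul, abs_mul])
    have h1 : |a 0| * |∏ i : Fin k, a i.succ - ∏ i : Fin k, b i.succ|
        ≤ H * (k * D * H ^ (k - 1)) := by
      apply mul_le_mul _ ihk (abs_nonneg _) hH
      rw [abs_of_nonneg (ha0 0)]; exact haH 0
    have h2 : |a 0 - b 0| * |∏ i : Fin k, b i.succ| ≤ D * H ^ k := by
      apply mul_le_mul (hab 0) _ (abs_nonneg _) hD
      rw [abs_of_nonneg hQ0]; exact hQH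
    have h3 : H * (k * D * H ^ (k - 1)) ≤ k * D * H ^ k := by
      cases k with
      | zero => simp
      | succ m =>
        rw [Nat.succ_sub_one, pow_succ]
        exact le_of_eq (by ring)
    calc |a 0 * ∏ i : Fin k, a i.succ - b 0 * ∏ i : Fin k, b i.succ|
        ≤ H * (k * D * H ^ (k - 1)) + D * H ^ k := le_trans key (add_le_add h1 h2)
      _ ≤ k * D * H ^ k + D * H ^ k := by linarith
      _ = (k + 1 : ℕ) * D * H ^ ((k + 1) - 1) := by
          rw [Nat.succ_sub_one]; push_cast; ring

theorem exp_neg_le_exp_neg_add {p q r : ℝ} (hp : 0 ≤ p) (hr : |p - q| ≤ r) :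
    Real.exp (-p) ≤ Real.exp (-q) + r := by
  rcases le_or_gt q p with h | h
  · have h1 : Real.exp (-p) ≤ Real.exp (-q) := Real.exp_le_exp.2 (by linarith)
    have h2 : 0 ≤ r := le_trans (abs_nonneg _) hr
    linarith
  · have h1 : Real.exp (-p) ≤ 1 := Real.exp_le_one_iff.2 (by linarith)
    have h2 : 1 - (q - p) ≤ Real.exp (-(q - p)) := by
      linarith [Real.add_one_le_exp (-(q - p))]
    have h2' : Real.exp (-(q - p)) ≤ 1 := Real.exp_le_one_iff.2 (by linarith)
    have h3 : Real.exp (-q) = Real.exp (-p) * Real.exp (-(q - p)) := by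
      rw [← Real.exp_add]; ring_nf
    have h4 : q - p ≤ r := by
      have := (abs_le.1 hr).1; linarith
    have h5 : Real.exp (-p) * (1 - Real.exp (-(q - p))) ≤ 1 * (q - p) :=
      mul_le_mul h1 (by linarith) (by linarith) zero_le_one
    nlinarith [Real.exp_pos (-p)]

theorem tsum_inv_factorial_le :
    ∑' k : ℕ, ((Nat.factorial k : ℝ≥0∞))⁻¹ ≤ ENNReal.ofReal 3 := by
  have h := ennreal_tsum_factorial 1 zero_le_one
  simp only [ENNReal.ofReal_one, one_pow, mul_one] at h
  rw [h]
  exact ENNReal.ofReal_le_ofReal (by nlinarith [Real.exp_one_lt_d9])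

theorem tsum_inv_factorial_mul_self_le :
    ∑' k : ℕ, ((Nat.factorial k : ℝ≥0∞))⁻¹ * (k : ℝ≥0∞) ≤ ENNReal.ofReal 9 := by
  have step : ∀ k : ℕ, ((Nat.factorial k : ℝ≥0∞))⁻¹ * (k : ℝ≥0∞)
      ≤ ((Nat.factorial k : ℝ≥0∞))⁻¹ * (ENNReal.ofReal 2) ^ k := by
    intro k
    apply mul_le_mul_right
    have h2 : (k : ℝ≥0∞) ≤ (2 : ℝ≥0∞) ^ k := by
      exact_mod_cast Nat.le_of_lt (Nat.lt_two_pow_self (n := k))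
    rw [ENNReal.ofReal_ofNat]
    exact h2
  calc ∑' k : ℕ, ((Nat.factorial k : ℝ≥0∞))⁻¹ * (k : ℝ≥0∞)
      ≤ ∑' k : ℕ, ((Nat.factorial k : ℝ≥0∞))⁻¹ * (ENNReal.ofReal 2) ^ k :=
        ENNReal.tsum_le_tsum step
    _ = ENNReal.ofReal (Real.exp 2) := ennreal_tsum_factorial 2 (by norm_num)
    _ ≤ ENNReal.ofReal 9 := by
        apply ENNReal.ofReal_le_ofReal
        have : Real.exp 2 = Real.exp 1 * Real.exp 1 := by
          rw [← Real.exp_add]; norm_num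
        nlinarith [Real.exp_one_lt_d9, Real.exp_pos 1]

end RealAux


section FcostAux

variable {X : Type*} [MeasurableSpace X] {S : Multiset X → ℝ}

theorem measurable_addSingleFun (x : X) :
    Measurable fun g : Multiset X => g + ({x} : Multiset X) :=
  measurable_addSingle.comp (measurable_id.prodMk measurable_const)

theorem measurable_phi (hSm : Measurable S) (x : X) :
    Measurable fun g : Multiset X => S (g + {x}) - S g :=
  (hSm.comp (measurable_addSingleFun x)).sub hSm

theorem Fcost_eq_toReal (hSm : Measurable S) (hmono : ∀ g h, S g ≤ S (g + h))
    (π : Measure X) (x : X) :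
    Fcost S π x = (∫⁻ g, ENNReal.ofReal (S (g + {x}) - S g) ∂poissonLaw π).toReal := by
  rw [Fcost]
  exact integral_eq_lintegral_of_nonneg_ae
    (ae_of_all _ fun g => sub_nonneg.2 (hmono g {x}))
    (measurable_phi hSm x).aestronglyMeasurable

theorem lintegral_phi_le (π : Measure X) [IsFiniteMeasure π] (x : X) {B : ℝ}
    (hb : ∀ g : Multiset X, S (g + {x}) - S g ≤ B) :
    ∫⁻ g, ENNReal.ofReal (S (g + {x}) - S g) ∂poissonLaw π ≤ ENNReal.ofReal B := by
  haveI := isProbability_poissonLaw π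
  calc ∫⁻ g, ENNReal.ofReal (S (g + {x}) - S g) ∂poissonLaw π
      ≤ ∫⁻ _g, ENNReal.ofReal B ∂poissonLaw π :=
        lintegral_mono fun g => ENNReal.ofReal_le_ofReal (hb g)
    _ = ENNReal.ofReal B := by rw [lintegral_const, measure_univ, mul_one]

theorem Fcost_le (π : Measure X) [IsFiniteMeasure π] (x : X) {B : ℝ}
    (hSm : Measurable S) (hmono : ∀ g h, S g ≤ S (g + h))
    (hb : ∀ g : Multiset X, S (g + {x}) - S g ≤ B) (hB : 0 ≤ B) :
    Fcost S π x ≤ B := by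
  rw [Fcost_eq_toReal hSm hmono]
  exact ENNReal.toReal_le_of_le_ofReal hB (lintegral_phi_le π x hb)

theorem Fcost_nonneg (hSm : Measurable S) (hmono : ∀ g h, S g ≤ S (g + h))
    (π : Measure X) (x : X) : 0 ≤ Fcost S π x := by
  rw [Fcost_eq_toReal hSm hmono]
  exact ENNReal.toReal_nonneg

theorem lintegral_phi_ge (π : Measure X) [IsFiniteMeasure π] (x : X)
    (hSm : Measurable S) (hzero : S 0 = 0) :
    ENNReal.ofReal (Real.exp (-(π Set.univ).toReal) * S ({x} : Multiset X)) ≤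
      ∫⁻ g, ENNReal.ofReal (S (g + {x}) - S g) ∂poissonLaw π := by
  have hfm : Measurable fun g : Multiset X => ENNReal.ofReal (S (g + {x}) - S g) :=
    (measurable_phi hSm x).ennreal_ofReal
  rw [lintegral_poissonLaw π hfm]
  have hterm0 : ((Nat.factorial 0 : ℝ≥0∞))⁻¹ * ∫⁻ y : Fin 0 → X,
      ENNReal.ofReal (S ((∑ i, ({y i} : Multiset X)) + {x}) - S (∑ i, ({y i} : Multiset X)))
        ∂(Measure.pi fun _ => π) = ENNReal.ofReal (S ({x} : Multiset X)) := by
    have hsum : ∀ y : Fin 0 → X, (∑ i, ({y i} : Multiset X)) = 0 := fun y => by simp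
    simp only [hsum, zero_add, hzero, sub_zero]
    rw [lintegral_const, Measure.pi_univ]
    simp
  rw [ENNReal.ofReal_mul (Real.exp_pos _).le]
  exact mul_le_mul_right (le_trans (le_of_eq hterm0.symm) (ENNReal.le_tsum 0)) _

theorem Fcost_ge (π : Measure X) [IsFiniteMeasure π] (x : X) {B : ℝ}
    (hSm : Measurable S) (hmono : ∀ g h, S g ≤ S (g + h)) (hzero : S 0 = 0)
    (hb : ∀ g : Multiset X, S (g + {x}) - S g ≤ B) :
    Real.exp (-(π Set.univ).toReal) * S ({x} : Multiset X) ≤ Fcost S π x := by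
  have hSx : 0 ≤ S ({x} : Multiset X) := by
    have := hmono 0 {x}
    rwa [hzero, zero_add] at this
  rw [Fcost_eq_toReal hSm hmono]
  have hfin : ∫⁻ g, ENNReal.ofReal (S (g + {x}) - S g) ∂poissonLaw π ≠ ⊤ :=
    ne_top_of_le_ne_top ENNReal.ofReal_ne_top (lintegral_phi_le π x hb)
  have hle := ENNReal.toReal_mono hfin (lintegral_phi_ge π x hSm hzero)
  rwa [ENNReal.toReal_ofReal (mul_nonneg (Real.exp_pos _).le hSx)] at hle

theorem Fcost_measurable (π : Measure X) [IsFiniteMeasure π]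
    (hSm : Measurable S) (hmono : ∀ g h, S g ≤ S (g + h)) :
    Measurable fun x => Fcost S π x := by
  haveI := isProbability_poissonLaw π
  have heq : (fun x => Fcost S π x) =
      fun x => (∫⁻ g, ENNReal.ofReal (S (g + {x}) - S g) ∂poissonLaw π).toReal :=
    funext fun x => Fcost_eq_toReal hSm hmono π x
  rw [heq]
  apply Measurable.ennreal_toReal
  exact Measurable.lintegral_prod_right
    (((hSm.comp (measurable_addSingle.comp (measurable_snd.prodMk measurable_fst))).sub
      (hSm.comp measurable_snd)).ennreal_ofReal)

end FcostAux


section CompareAux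

variable {X : Type*} [MeasurableSpace X] {S : Multiset X → ℝ}

theorem withDensity_univ_le (ν : Measure X) {f : X → ℝ} {H : ℝ}
    (hfH : ∀ y, f y ≤ H) :
    (ν.withDensity fun y => ENNReal.ofReal (f y)) Set.univ ≤ ENNReal.ofReal H * ν Set.univ := by
  rw [withDensity_apply _ MeasurableSet.univ, setLIntegral_univ]
  calc ∫⁻ y, ENNReal.ofReal (f y) ∂ν ≤ ∫⁻ _y, ENNReal.ofReal H ∂ν :=
        lintegral_mono fun y => ENNReal.ofReal_le_ofReal (hfH y)
    _ = ENNReal.ofReal H * ν Set.univ := lintegral_const _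

theorem isFiniteMeasure_withDensity_ofReal (ν : Measure X) [IsFiniteMeasure ν]
    {f : X → ℝ} {H : ℝ} (hfH : ∀ y, f y ≤ H) :
    IsFiniteMeasure (ν.withDensity fun y => ENNReal.ofReal (f y)) := by
  constructor
  refine lt_of_le_of_lt (withDensity_univ_le ν hfH) ?_
  exact ENNReal.mul_lt_top ENNReal.ofReal_lt_top (measure_lt_top ν _)

theorem lintegral_phi_withDensity_le (hSm : Measurable S)
    (ν : Measure X) [IsFiniteMeasure ν]
    {B H D : ℝ} (hB : 0 ≤ B) (hH : 0 ≤ H) (hD : 0 ≤ D)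
    (hHB : H * (ν Set.univ).toReal ≤ 1) (hD2H : D ≤ 2 * H)
    {h h' : X → ℝ} (hhm : Measurable h) (hh'm : Measurable h')
    (hh0 : ∀ y, 0 ≤ h y) (hhH : ∀ y, h y ≤ H)
    (hh'0 : ∀ y, 0 ≤ h' y) (hh'H : ∀ y, h' y ≤ H)
    (hdiff : ∀ y, |h y - h' y| ≤ D)
    (x : X) (hbd : ∀ g : Multiset X, S (g + {x}) - S g ≤ B) :
    ∫⁻ g, ENNReal.ofReal (S (g + {x}) - S g)
        ∂poissonLaw (ν.withDensity fun y => ENNReal.ofReal (h y))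
      ≤ (∫⁻ g, ENNReal.ofReal (S (g + {x}) - S g)
          ∂poissonLaw (ν.withDensity fun y => ENNReal.ofReal (h' y)))
        + ENNReal.ofReal (30 * B * (ν Set.univ).toReal * D) := by
  set Bν : ℝ := (ν Set.univ).toReal with hBνdef
  have hBν : 0 ≤ Bν := ENNReal.toReal_nonneg
  set w : X → ℝ≥0∞ := fun y => ENNReal.ofReal (h y) with hwdef
  set w' : X → ℝ≥0∞ := fun y => ENNReal.ofReal (h' y) with hw'def
  have hwm : Measurable w := hhm.ennreal_ofReal
  have hw'm : Measurable w' := hh'm.ennreal_ofReal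
  set ρ := ν.withDensity w with hρdef
  set σ := ν.withDensity w' with hσdef
  haveI : IsFiniteMeasure ρ := isFiniteMeasure_withDensity_ofReal ν hhH
  haveI : IsFiniteMeasure σ := isFiniteMeasure_withDensity_ofReal ν hh'H
  have hνuniv : ν Set.univ = ENNReal.ofReal Bν := (ENNReal.ofReal_toReal (measure_ne_top ν _)).symm
  have hρ1 : ρ Set.univ ≤ 1 := by
    calc ρ Set.univ ≤ ENNReal.ofReal H * ν Set.univ := withDensity_univ_le ν hhH
      _ = ENNReal.ofReal (H * Bν) := by rw [hνuniv, ← ENNReal.ofReal_mul hH]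
      _ ≤ 1 := by rw [← ENNReal.ofReal_one]; exact ENNReal.ofReal_le_ofReal hHB
  have hσ1 : σ Set.univ ≤ 1 := by
    calc σ Set.univ ≤ ENNReal.ofReal H * ν Set.univ := withDensity_univ_le ν hh'H
      _ = ENNReal.ofReal (H * Bν) := by rw [hνuniv, ← ENNReal.ofReal_mul hH]
      _ ≤ 1 := by rw [← ENNReal.ofReal_one]; exact ENNReal.ofReal_le_ofReal hHB
  set aρ : ℝ := (ρ Set.univ).toReal with haρ
  set aσ : ℝ := (σ Set.univ).toReal with haσ
  -- |aρ - aσ| ≤ D * Bν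
  have hone : ∀ (f g : X → ℝ), Measurable g → (∀ y, f y ≤ g y + D) →
      ν.withDensity (fun y => ENNReal.ofReal (f y)) Set.univ ≤
        ν.withDensity (fun y => ENNReal.ofReal (g y)) Set.univ + ENNReal.ofReal D * ν Set.univ := by
    intro f g hgm hfg
    rw [withDensity_apply _ MeasurableSet.univ, setLIntegral_univ,
      withDensity_apply _ MeasurableSet.univ, setLIntegral_univ]
    calc ∫⁻ y, ENNReal.ofReal (f y) ∂ν
        ≤ ∫⁻ y, ENNReal.ofReal (g y) + ENNReal.ofReal D ∂ν := by
          refine lintegral_mono fun y => ?_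
          exact le_trans (ENNReal.ofReal_le_ofReal (hfg y)) ENNReal.ofReal_add_le
      _ = ∫⁻ y, ENNReal.ofReal (g y) ∂ν + ENNReal.ofReal D * ν Set.univ := by
          rw [lintegral_add_right _ measurable_const, lintegral_const]
  have habs : |aρ - aσ| ≤ D * Bν := by
    have h1 : ρ Set.univ ≤ σ Set.univ + ENNReal.ofReal D * ν Set.univ :=
      hone h h' hh'm fun y => by have := (abs_le.1 (hdiff y)).2; linarith
    have h2 : σ Set.univ ≤ ρ Set.univ + ENNReal.ofReal D * ν Set.univ :=
      hone h' h hhm fun y => by have := (abs_le.1 (hdiff y)).1; linarith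
    have hfin1 : σ Set.univ + ENNReal.ofReal D * ν Set.univ ≠ ⊤ := by
      refine ENNReal.add_ne_top.2 ⟨measure_ne_top _ _, ?_⟩
      exact ENNReal.mul_ne_top ENNReal.ofReal_ne_top (measure_ne_top ν _)
    have hfin2 : ρ Set.univ + ENNReal.ofReal D * ν Set.univ ≠ ⊤ := by
      refine ENNReal.add_ne_top.2 ⟨measure_ne_top _ _, ?_⟩
      exact ENNReal.mul_ne_top ENNReal.ofReal_ne_top (measure_ne_top ν _)
    have t1 := ENNReal.toReal_mono hfin1 h1
    have t2 := ENNReal.toReal_mono hfin2 h2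
    rw [ENNReal.toReal_add (measure_ne_top _ _)
        (ENNReal.mul_ne_top ENNReal.ofReal_ne_top (measure_ne_top ν _)),
      ENNReal.toReal_mul, ENNReal.toReal_ofReal hD] at t1 t2
    rw [abs_le]
    constructor <;> [linarith; linarith]
  have hcoeff : ENNReal.ofReal (Real.exp (-aρ)) ≤
      ENNReal.ofReal (Real.exp (-aσ)) + ENNReal.ofReal (D * Bν) :=
    le_trans (ENNReal.ofReal_le_ofReal
      (exp_neg_le_exp_neg_add ENNReal.toReal_nonneg habs)) ENNReal.ofReal_add_le
  -- the integrands over (Fin k → X)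
  set ψ : ∀ k : ℕ, (Fin k → X) → ℝ≥0∞ := fun k y =>
    ENNReal.ofReal (S ((∑ i, ({y i} : Multiset X)) + {x}) - S (∑ i, ({y i} : Multiset X)))
    with hψdef
  have hψm : ∀ k, Measurable (ψ k) := fun k =>
    ((measurable_phi hSm x).comp (measurable_sumMap k)).ennreal_ofReal
  have hψB : ∀ k y, ψ k y ≤ ENNReal.ofReal B := fun k y =>
    ENNReal.ofReal_le_ofReal (hbd _)
  have hfm : Measurable fun g : Multiset X => ENNReal.ofReal (S (g + {x}) - S g) :=
    (measurable_phi hSm x).ennreal_ofReal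
  set J : (X → ℝ≥0∞) → ℕ → ℝ≥0∞ := fun v k =>
    ∫⁻ y : Fin k → X, (∏ i, v (y i)) * ψ k y ∂(Measure.pi fun _ => ν) with hJdef
  have hpi : ∀ (v : X → ℝ≥0∞), Measurable v → SigmaFinite (ν.withDensity v) → (∀ k : ℕ,
      (∫⁻ y : Fin k → X, ψ k y ∂(Measure.pi fun _ => ν.withDensity v)) = J v k) := by
    intro v hvm hsf k
    haveI := hsf
    have hWm : Measurable fun y : Fin k → X => ∏ i, v (y i) :=
      Finset.measurable_prod _ fun i _ => hvm.comp (measurable_pi_apply i)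
    rw [pi_withDensity_eq hvm k, lintegral_withDensity_eq_lintegral_mul _ hWm (hψm k)]
    rfl
  have hσuniv : σ Set.univ = ∫⁻ y, w' y ∂ν := by
    rw [hσdef, withDensity_apply _ MeasurableSet.univ, setLIntegral_univ]
  have hpiuniv : ∀ k : ℕ, (Measure.pi fun _ : Fin k => ν) Set.univ
      = (ENNReal.ofReal Bν) ^ k := by
    intro k
    rw [Measure.pi_univ, Finset.prod_const, Finset.card_univ, Fintype.card_fin, hνuniv]
  have hLHS : ∫⁻ g, ENNReal.ofReal (S (g + {x}) - S g) ∂poissonLaw ρ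
      = ENNReal.ofReal (Real.exp (-aρ)) *
        ∑' k : ℕ, ((Nat.factorial k : ℝ≥0∞))⁻¹ * J w k := by
    rw [lintegral_poissonLaw ρ hfm]
    exact congrArg _ (tsum_congr fun k =>
      congrArg (fun z => ((Nat.factorial k : ℝ≥0∞))⁻¹ * z) (hpi w hwm inferInstance k))
  have hRHS : ∫⁻ g, ENNReal.ofReal (S (g + {x}) - S g) ∂poissonLaw σ
      = ENNReal.ofReal (Real.exp (-aσ)) *
        ∑' k : ℕ, ((Nat.factorial k : ℝ≥0∞))⁻¹ * J w' k := by
    rw [lintegral_poissonLaw σ hfm]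
    exact congrArg _ (tsum_congr fun k =>
      congrArg (fun z => ((Nat.factorial k : ℝ≥0∞))⁻¹ * z) (hpi w' hw'm inferInstance k))
  rw [hLHS, hRHS]
  -- termwise comparison of the J's
  have hJdiff : ∀ k : ℕ, J w k ≤ J w' k + ENNReal.ofReal (B * D * Bν) * k := by
    intro k
    have hprod_pt : ∀ y : Fin k → X, (∏ i, w (y i)) ≤
        (∏ i, w' (y i)) + ENNReal.ofReal (k * D * H ^ (k - 1)) := by
      intro y
      have hreal := fin_prod_diff_le hH hD (fun i => h (y i)) (fun i => h' (y i))
        (fun i => hh0 _) (fun i => hhH _) (fun i => hh'0 _) (fun i => hh'H _)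
        (fun i => hdiff _)
      have h1 : (∏ i, h (y i)) ≤ (∏ i, h' (y i)) + (k : ℝ) * D * H ^ (k - 1) := by
        have := (abs_le.1 hreal).2; linarith
      calc (∏ i, w (y i)) = ENNReal.ofReal (∏ i, h (y i)) :=
            (ENNReal.ofReal_prod_of_nonneg fun i _ => hh0 (y i)).symm
        _ ≤ ENNReal.ofReal ((∏ i, h' (y i)) + (k : ℝ) * D * H ^ (k - 1)) :=
            ENNReal.ofReal_le_ofReal h1
        _ ≤ ENNReal.ofReal (∏ i, h' (y i)) + ENNReal.ofReal ((k : ℝ) * D * H ^ (k - 1)) :=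
            ENNReal.ofReal_add_le
        _ = (∏ i, w' (y i)) + ENNReal.ofReal ((k : ℝ) * D * H ^ (k - 1)) := by
            rw [ENNReal.ofReal_prod_of_nonneg fun i _ => hh'0 (y i)]
    have hWm' : Measurable fun y : Fin k → X => ∏ i, w' (y i) :=
      Finset.measurable_prod _ fun i _ => hw'm.comp (measurable_pi_apply i)
    have hstep : J w k ≤ J w' k + ENNReal.ofReal ((k : ℝ) * D * H ^ (k - 1)) *
        (ENNReal.ofReal B * (ENNReal.ofReal Bν) ^ k) := by
      calc J w k ≤ ∫⁻ y, ((∏ i, w' (y i)) + ENNReal.ofReal ((k : ℝ) * D * H ^ (k - 1)))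
            * ψ k y ∂(Measure.pi fun _ => ν) :=
            lintegral_mono fun y => mul_le_mul_left (hprod_pt y) _
        _ = J w' k + ∫⁻ y, ENNReal.ofReal ((k : ℝ) * D * H ^ (k - 1)) * ψ k y
              ∂(Measure.pi fun _ => ν) := by
            simp only [add_mul]
            rw [lintegral_add_left (f := fun y : Fin k → X => (∏ i, w' (y i)) * ψ k y) (hWm'.mul (hψm k))]
        _ ≤ J w' k + ENNReal.ofReal ((k : ℝ) * D * H ^ (k - 1)) *
              (ENNReal.ofReal B * (ENNReal.ofReal Bν) ^ k) := by
            refine add_le_add_right ?_ _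
            rw [lintegral_const_mul _ (hψm k)]
            refine mul_le_mul_right ?_ _
            calc ∫⁻ y, ψ k y ∂(Measure.pi fun _ => ν)
                ≤ ∫⁻ _y, ENNReal.ofReal B ∂(Measure.pi fun _ => ν) :=
                  lintegral_mono (hψB k)
              _ = ENNReal.ofReal B * (ENNReal.ofReal Bν) ^ k := by
                  rw [lintegral_const, hpiuniv k]
    refine le_trans hstep (add_le_add_right ?_ _)
    have hofs : ENNReal.ofReal ((k : ℝ) * D * H ^ (k - 1)) *
        (ENNReal.ofReal B * (ENNReal.ofReal Bν) ^ k)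
        = ENNReal.ofReal ((k : ℝ) * D * H ^ (k - 1) * (B * Bν ^ k)) := by
      rw [← ENNReal.ofReal_pow hBν, ← ENNReal.ofReal_mul hB,
        ← ENNReal.ofReal_mul (by positivity)]
    rw [hofs]
    have hr : (k : ℝ) * D * H ^ (k - 1) * (B * Bν ^ k) ≤ B * D * Bν * k := by
      cases k with
      | zero => simp
      | succ m =>
        have h1 : H ^ m * Bν ^ (m + 1) ≤ Bν := by
          have he : H ^ m * Bν ^ (m + 1) = (H * Bν) ^ m * Bν := by
            rw [mul_pow, pow_succ]; ring
          rw [he]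
          calc (H * Bν) ^ m * Bν ≤ 1 * Bν := by
                refine mul_le_mul_of_nonneg_right ?_ hBν
                exact pow_le_one₀ (mul_nonneg hH hBν) hHB
            _ = Bν := one_mul Bν
        calc ((m + 1 : ℕ) : ℝ) * D * H ^ (m + 1 - 1) * (B * Bν ^ (m + 1))
            = (((m + 1 : ℕ) : ℝ) * D * B) * (H ^ m * Bν ^ (m + 1)) := by
              rw [Nat.succ_sub_one]; ring
          _ ≤ (((m + 1 : ℕ) : ℝ) * D * B) * Bν := by
              refine mul_le_mul_of_nonneg_left h1 (by positivity)
          _ = B * D * Bν * ((m + 1 : ℕ) : ℝ) := by ring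
    calc ENNReal.ofReal ((k : ℝ) * D * H ^ (k - 1) * (B * Bν ^ k))
        ≤ ENNReal.ofReal (B * D * Bν * k) := ENNReal.ofReal_le_ofReal hr
      _ = ENNReal.ofReal (B * D * Bν) * (k : ℝ≥0∞) := by
          rw [ENNReal.ofReal_mul (by positivity), ENNReal.ofReal_natCast]
  have hJ'B : ∀ k : ℕ, J w' k ≤ ENNReal.ofReal B := by
    intro k
    have hWm' : Measurable fun y : Fin k → X => ∏ i, w' (y i) :=
      Finset.measurable_prod _ fun i _ => hw'm.comp (measurable_pi_apply i)
    calc J w' k ≤ ∫⁻ y, (∏ i, w' (y i)) * ENNReal.ofReal B ∂(Measure.pi fun _ => ν) :=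
          lintegral_mono fun y => mul_le_mul_right (hψB k y) _
      _ = (∫⁻ y, ∏ i, w' (y i) ∂(Measure.pi fun _ => ν)) * ENNReal.ofReal B :=
          lintegral_mul_const _ hWm'
      _ = (∏ _i : Fin k, ∫⁻ z, w' z ∂ν) * ENNReal.ofReal B := by
          rw [lintegral_fin_prod (fun _ => w') fun _ => hw'm]
      _ = (σ Set.univ) ^ k * ENNReal.ofReal B := by
          rw [Finset.prod_const, Finset.card_univ, Fintype.card_fin, hσuniv]
      _ ≤ (1 : ℝ≥0∞) ^ k * ENNReal.ofReal B :=
          mul_le_mul_left (pow_le_pow_left' hσ1 k) _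
      _ = ENNReal.ofReal B := by rw [one_pow, one_mul]
  -- summation
  have hsumE : ∑' k : ℕ, ((Nat.factorial k : ℝ≥0∞))⁻¹ * (ENNReal.ofReal (B * D * Bν) * k)
      ≤ ENNReal.ofReal (9 * (B * D * Bν)) := by
    have heq : ∀ k : ℕ, ((Nat.factorial k : ℝ≥0∞))⁻¹ * (ENNReal.ofReal (B * D * Bν) * k)
        = ENNReal.ofReal (B * D * Bν) * (((Nat.factorial k : ℝ≥0∞))⁻¹ * k) := by
      intro k; ring
    rw [tsum_congr heq, ENNReal.tsum_mul_left]
    calc ENNReal.ofReal (B * D * Bν) * ∑' k : ℕ, ((Nat.factorial k : ℝ≥0∞))⁻¹ * k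
        ≤ ENNReal.ofReal (B * D * Bν) * ENNReal.ofReal 9 :=
          mul_le_mul_right tsum_inv_factorial_mul_self_le _
      _ = ENNReal.ofReal (9 * (B * D * Bν)) := by
          rw [← ENNReal.ofReal_mul (by positivity), mul_comm]
  have hsum1 : ∑' k : ℕ, ((Nat.factorial k : ℝ≥0∞))⁻¹ * J w k
      ≤ (∑' k : ℕ, ((Nat.factorial k : ℝ≥0∞))⁻¹ * J w' k)
        + ENNReal.ofReal (9 * (B * D * Bν)) := by
    calc ∑' k : ℕ, ((Nat.factorial k : ℝ≥0∞))⁻¹ * J w k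
        ≤ ∑' k : ℕ, (((Nat.factorial k : ℝ≥0∞))⁻¹ * J w' k
            + ((Nat.factorial k : ℝ≥0∞))⁻¹ * (ENNReal.ofReal (B * D * Bν) * k)) := by
          refine ENNReal.tsum_le_tsum fun k => ?_
          rw [← mul_add]
          exact mul_le_mul_right (hJdiff k) _
      _ = (∑' k : ℕ, ((Nat.factorial k : ℝ≥0∞))⁻¹ * J w' k)
            + ∑' k : ℕ, ((Nat.factorial k : ℝ≥0∞))⁻¹ * (ENNReal.ofReal (B * D * Bν) * k) :=
          ENNReal.tsum_add
      _ ≤ _ + ENNReal.ofReal (9 * (B * D * Bν)) := add_le_add_right hsumE _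
  have hsum2 : ∑' k : ℕ, ((Nat.factorial k : ℝ≥0∞))⁻¹ * J w' k ≤ ENNReal.ofReal (3 * B) := by
    calc ∑' k : ℕ, ((Nat.factorial k : ℝ≥0∞))⁻¹ * J w' k
        ≤ ∑' k : ℕ, ((Nat.factorial k : ℝ≥0∞))⁻¹ * ENNReal.ofReal B :=
          ENNReal.tsum_le_tsum fun k => mul_le_mul_right (hJ'B k) _
      _ = (∑' k : ℕ, ((Nat.factorial k : ℝ≥0∞))⁻¹) * ENNReal.ofReal B :=
          ENNReal.tsum_mul_right
      _ ≤ ENNReal.ofReal 3 * ENNReal.ofReal B :=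
          mul_le_mul_left tsum_inv_factorial_le _
      _ = ENNReal.ofReal (3 * B) := by rw [← ENNReal.ofReal_mul (by norm_num)]
  -- final assembly
  have hAσ : ENNReal.ofReal (Real.exp (-aσ)) ≤ 1 := by
    rw [← ENNReal.ofReal_one]
    exact ENNReal.ofReal_le_ofReal (Real.exp_le_one_iff.2 (by
      simp only [neg_nonpos]; exact ENNReal.toReal_nonneg))
  have hdd2 : ENNReal.ofReal (D * Bν) ≤ ENNReal.ofReal 2 := by
    refine ENNReal.ofReal_le_ofReal ?_
    calc D * Bν ≤ 2 * H * Bν := mul_le_mul_of_nonneg_right hD2H hBν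
      _ = 2 * (H * Bν) := by ring
      _ ≤ 2 * 1 := by linarith [hHB]
      _ = 2 := by norm_num
  calc ENNReal.ofReal (Real.exp (-aρ)) * ∑' k : ℕ, ((Nat.factorial k : ℝ≥0∞))⁻¹ * J w k
      ≤ (ENNReal.ofReal (Real.exp (-aσ)) + ENNReal.ofReal (D * Bν)) *
        ((∑' k : ℕ, ((Nat.factorial k : ℝ≥0∞))⁻¹ * J w' k) + ENNReal.ofReal (9 * (B * D * Bν))) :=
        mul_le_mul' hcoeff hsum1
    _ = ENNReal.ofReal (Real.exp (-aσ)) * (∑' k : ℕ, ((Nat.factorial k : ℝ≥0∞))⁻¹ * J w' k)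
          + (ENNReal.ofReal (Real.exp (-aσ)) * ENNReal.ofReal (9 * (B * D * Bν))
            + ENNReal.ofReal (D * Bν) * (∑' k : ℕ, ((Nat.factorial k : ℝ≥0∞))⁻¹ * J w' k)
            + ENNReal.ofReal (D * Bν) * ENNReal.ofReal (9 * (B * D * Bν))) := by ring
    _ ≤ ENNReal.ofReal (Real.exp (-aσ)) * (∑' k : ℕ, ((Nat.factorial k : ℝ≥0∞))⁻¹ * J w' k)
          + ENNReal.ofReal (30 * B * Bν * D) := by
        refine add_le_add_right ?_ _
        have e1 : ENNReal.ofReal (Real.exp (-aσ)) * ENNReal.ofReal (9 * (B * D * Bν))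
            ≤ ENNReal.ofReal (9 * (B * D * Bν)) := by
          calc _ ≤ 1 * ENNReal.ofReal (9 * (B * D * Bν)) := mul_le_mul_left hAσ _
            _ = _ := one_mul _
        have e2 : ENNReal.ofReal (D * Bν) * (∑' k : ℕ, ((Nat.factorial k : ℝ≥0∞))⁻¹ * J w' k)
            ≤ ENNReal.ofReal (D * Bν * (3 * B)) := by
          calc _ ≤ ENNReal.ofReal (D * Bν) * ENNReal.ofReal (3 * B) :=
                mul_le_mul_right hsum2 _
            _ = _ := by rw [← ENNReal.ofReal_mul (by positivity)]
        have e3 : ENNReal.ofReal (D * Bν) * ENNReal.ofReal (9 * (B * D * Bν))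
            ≤ ENNReal.ofReal (2 * (9 * (B * D * Bν))) := by
          calc _ ≤ ENNReal.ofReal 2 * ENNReal.ofReal (9 * (B * D * Bν)) :=
                mul_le_mul_left hdd2 _
            _ = _ := by rw [← ENNReal.ofReal_mul (by norm_num)]
        calc ENNReal.ofReal (Real.exp (-aσ)) * ENNReal.ofReal (9 * (B * D * Bν))
              + ENNReal.ofReal (D * Bν) * (∑' k : ℕ, ((Nat.factorial k : ℝ≥0∞))⁻¹ * J w' k)
              + ENNReal.ofReal (D * Bν) * ENNReal.ofReal (9 * (B * D * Bν))
            ≤ ENNReal.ofReal (9 * (B * D * Bν)) + ENNReal.ofReal (D * Bν * (3 * B))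
              + ENNReal.ofReal (2 * (9 * (B * D * Bν))) := add_le_add (add_le_add e1 e2) e3
          _ = ENNReal.ofReal (9 * (B * D * Bν) + D * Bν * (3 * B) + 2 * (9 * (B * D * Bν))) := by
              rw [← ENNReal.ofReal_add (by positivity) (by positivity),
                ← ENNReal.ofReal_add (by positivity) (by positivity)]
          _ = ENNReal.ofReal (30 * B * Bν * D) := by
              exact congrArg ENNReal.ofReal (by ring)

end CompareAux


section FixAux

variable {X : Type*} [MeasurableSpace X]

/-- Auxiliary: the measure with density `x ↦ ofReal (h x)` w.r.t. `ν`. -/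
noncomputable def wdAux (ν : Measure X) (h : X → ℝ) : Measure X :=
  ν.withDensity fun y => ENNReal.ofReal (h y)

theorem Fcost_wd_diff_le {S : Multiset X → ℝ}
    (hSm : Measurable S) (hmono : ∀ g h, S g ≤ S (g + h))
    (ν : Measure X) [IsFiniteMeasure ν]
    {B H D : ℝ} (hB : 0 ≤ B) (hH : 0 ≤ H) (hD : 0 ≤ D)
    (hHB : H * (ν Set.univ).toReal ≤ 1) (hD2H : D ≤ 2 * H)
    {h h' : X → ℝ} (hhm : Measurable h) (hh'm : Measurable h')
    (hh0 : ∀ y, 0 ≤ h y) (hhH : ∀ y, h y ≤ H)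
    (hh'0 : ∀ y, 0 ≤ h' y) (hh'H : ∀ y, h' y ≤ H)
    (hdiff : ∀ y, |h y - h' y| ≤ D)
    (x : X) (hbd : ∀ g : Multiset X, S (g + {x}) - S g ≤ B) :
    |Fcost S (wdAux ν h) x - Fcost S (wdAux ν h') x|
      ≤ 30 * B * (ν Set.univ).toReal * D := by
  haveI : IsFiniteMeasure (wdAux ν h) := isFiniteMeasure_withDensity_ofReal ν hhH
  haveI : IsFiniteMeasure (wdAux ν h') := isFiniteMeasure_withDensity_ofReal ν hh'H
  have hδ : 0 ≤ 30 * B * (ν Set.univ).toReal * D := by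
    have := ENNReal.toReal_nonneg (a := ν Set.univ); positivity
  rw [Fcost_eq_toReal hSm hmono, Fcost_eq_toReal hSm hmono]
  set L := ∫⁻ g, ENNReal.ofReal (S (g + {x}) - S g) ∂poissonLaw (wdAux ν h) with hLdef
  set L' := ∫⁻ g, ENNReal.ofReal (S (g + {x}) - S g) ∂poissonLaw (wdAux ν h') with hL'def
  have hLfin : L ≠ ⊤ := ne_top_of_le_ne_top ENNReal.ofReal_ne_top (lintegral_phi_le _ x hbd)
  have hL'fin : L' ≠ ⊤ := ne_top_of_le_ne_top ENNReal.ofReal_ne_top (lintegral_phi_le _ x hbd)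
  have h1 : L ≤ L' + ENNReal.ofReal (30 * B * (ν Set.univ).toReal * D) :=
    lintegral_phi_withDensity_le hSm ν hB hH hD hHB hD2H hhm hh'm hh0 hhH hh'0 hh'H hdiff x hbd
  have h2 : L' ≤ L + ENNReal.ofReal (30 * B * (ν Set.univ).toReal * D) :=
    lintegral_phi_withDensity_le hSm ν hB hH hD hHB hD2H hh'm hhm hh'0 hh'H hh0 hhH
      (fun y => by rw [abs_sub_comm]; exact hdiff y) x hbd
  have t1 := ENNReal.toReal_mono
    (ENNReal.add_ne_top.2 ⟨hL'fin, ENNReal.ofReal_ne_top⟩) h1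
  have t2 := ENNReal.toReal_mono
    (ENNReal.add_ne_top.2 ⟨hLfin, ENNReal.ofReal_ne_top⟩) h2
  rw [ENNReal.toReal_add hL'fin ENNReal.ofReal_ne_top, ENNReal.toReal_ofReal hδ] at t1
  rw [ENNReal.toReal_add hLfin ENNReal.ofReal_ne_top, ENNReal.toReal_ofReal hδ] at t2
  rw [abs_le]
  constructor <;> linarith

end FixAux

variable {M : Type*} [MetricSpace M] [CompleteSpace M] [TopologicalSpace.SeparableSpace M]
  [MeasurableSpace M] [BorelSpace M]

theorem exists_equilibrium_small_mutation (S : Multiset M → ℝ) (K : ℝ)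
    (hS : IsSelectiveCost S K) (ν : Measure M) [IsFiniteMeasure ν]
    (hinf : ∃ ε > (0:ℝ), ∀ m : M, ε ≤ S {m}) :
    ∃ U > (0:ℝ), ∀ u : ℝ, 0 ≤ u → u ≤ U →
      ∃ ρ : Measure M, IsFiniteMeasure ρ ∧
        ∀ A : Set M, MeasurableSet A → u * (ν A).toReal = ((Dop S ρ) A).toReal := by
  classical
  obtain ⟨ε, hε, hεS⟩ := hinf
  have hSm := hS.measurable
  have hmono := hS.mono
  have hzero := hS.map_zero
  set B : ℝ := max K 1 with hBdef
  have hB0 : (0:ℝ) ≤ B := le_trans zero_le_one (le_max_right _ _)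
  have hB1 : (1:ℝ) ≤ B := le_max_right _ _
  have hφ_le : ∀ (x : M) (g : Multiset M), S (g + {x}) - S g ≤ B := by
    intro x g
    have h1 : |S (g + {x}) - S g| ≤ K * dG (g + {x}) g := hS.lip (g + {x}) g
    have h2 : dG (g + {x}) g ≤ 1 := dG_addSingle_le g x
    have h3 : 0 ≤ dG (g + {x}) g := dG_addSingle_nonneg g x
    have h5 := le_abs_self (S (g + {x}) - S g)
    rcases le_or_gt K 0 with hK0 | hK0
    · nlinarith
    · have h4 : K * dG (g + {x}) g ≤ K := by nlinarith
      have h6 : K ≤ B := le_max_left _ _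
      linarith
  set Bν : ℝ := (ν Set.univ).toReal with hBνdef
  have hBν : 0 ≤ Bν := ENNReal.toReal_nonneg
  have hνofReal : ν Set.univ = ENNReal.ofReal Bν :=
    (ENNReal.ofReal_toReal (measure_ne_top ν _)).symm
  set H : ℝ := (Bν + 1)⁻¹ with hHdef
  have hH0 : 0 < H := inv_pos.2 (by linarith)
  have hHBν : H * Bν ≤ 1 := by
    rw [hHdef, mul_comm, ← div_eq_mul_inv]
    exact (div_le_one (by linarith)).2 (by linarith)
  set c : ℝ := ε * Real.exp (-1) with hcdef
  have hc0 : 0 < c := mul_pos hε (Real.exp_pos _)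
  set Λ : ℝ := 30 * B * Bν with hΛdef
  have hΛ0 : 0 ≤ Λ := by positivity
  refine ⟨min (c * H) (c ^ 2 / (2 * (Λ + 1))), lt_min (by positivity) (by positivity),
    fun u hu0 huU => ?_⟩
  have huH : u ≤ c * H := le_trans huU (min_le_left _ _)
  have huΛ : u * (2 * (Λ + 1)) ≤ c ^ 2 :=
    (le_div_iff₀ (by positivity)).1 (le_trans huU (min_le_right _ _))
  -- bounds on Fcost for good densities
  have hFbound : ∀ f : M → ℝ, Measurable f → (∀ x, 0 ≤ f x) → (∀ x, f x ≤ H) →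
      ∀ x, c ≤ Fcost S (wdAux ν f) x ∧ Fcost S (wdAux ν f) x ≤ B := by
    intro f hm h0 hHf x
    haveI : IsFiniteMeasure (wdAux ν f) := isFiniteMeasure_withDensity_ofReal ν hHf
    have ha1 : ((wdAux ν f) Set.univ).toReal ≤ 1 := by
      have h1 : (wdAux ν f) Set.univ ≤ ENNReal.ofReal (H * Bν) := by
        refine le_trans (withDensity_univ_le ν hHf) ?_
        rw [hνofReal, ← ENNReal.ofReal_mul hH0.le]
      have h2 := ENNReal.toReal_mono ENNReal.ofReal_ne_top h1
      rw [ENNReal.toReal_ofReal (by positivity)] at h2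
      linarith
    constructor
    · have hge := Fcost_ge (wdAux ν f) x hSm hmono hzero (hφ_le x)
      refine le_trans ?_ hge
      have hea : Real.exp (-1) ≤ Real.exp (-((wdAux ν f) Set.univ).toReal) :=
        Real.exp_le_exp.2 (by linarith)
      calc c = Real.exp (-1) * ε := by rw [hcdef]; ring
        _ ≤ Real.exp (-((wdAux ν f) Set.univ).toReal) * S {x} :=
          mul_le_mul hea (hεS x) hε.le (Real.exp_pos _).le
    · exact Fcost_le (wdAux ν f) x hSm hmono (hφ_le x) hB0
  -- the iteration map
  set T : (M → ℝ) → M → ℝ := fun f x => u / Fcost S (wdAux ν f) x with hTdef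
  have hTGood : ∀ f : M → ℝ, Measurable f → (∀ x, 0 ≤ f x) → (∀ x, f x ≤ H) →
      Measurable (T f) ∧ (∀ x, 0 ≤ T f x) ∧ (∀ x, T f x ≤ H) := by
    intro f hm h0 hHf
    haveI : IsFiniteMeasure (wdAux ν f) := isFiniteMeasure_withDensity_ofReal ν hHf
    have hFb := hFbound f hm h0 hHf
    refine ⟨measurable_const.div (Fcost_measurable (wdAux ν f) hSm hmono), fun x => ?_, fun x => ?_⟩
    · exact div_nonneg hu0 (le_trans hc0.le (hFb x).1)
    · have hFpos : 0 < Fcost S (wdAux ν f) x := lt_of_lt_of_le hc0 (hFb x).1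
      calc T f x = u / Fcost S (wdAux ν f) x := rfl
        _ ≤ u / c := div_le_div_of_nonneg_left hu0 hc0 (hFb x).1
        _ ≤ H := (div_le_iff₀ hc0).2 (by linarith [huH])
  -- contraction estimate
  have hTcontr : ∀ f g : M → ℝ, Measurable f → Measurable g →
      (∀ x, 0 ≤ f x) → (∀ x, f x ≤ H) → (∀ x, 0 ≤ g x) → (∀ x, g x ≤ H) →
      ∀ D : ℝ, 0 ≤ D → D ≤ 2 * H → (∀ y, |f y - g y| ≤ D) →
      ∀ x, |T f x - T g x| ≤ D / 2 := by
    intro f g hfm hgm hf0 hfH hg0 hgH D hD0 hD2H hdiff x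
    have hFf := hFbound f hfm hf0 hfH x
    have hFg := hFbound g hgm hg0 hgH x
    have hFd : |Fcost S (wdAux ν f) x - Fcost S (wdAux ν g) x| ≤ Λ * D := by
      have hd := Fcost_wd_diff_le hSm hmono ν hB0 hH0.le hD0 hHBν hD2H hfm hgm
        hf0 hfH hg0 hgH hdiff x (hφ_le x)
      rw [← hBνdef] at hd
      rw [hΛdef]
      exact hd
    have hFpos : 0 < Fcost S (wdAux ν f) x := lt_of_lt_of_le hc0 hFf.1
    have hGpos : 0 < Fcost S (wdAux ν g) x := lt_of_lt_of_le hc0 hFg.1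
    have heq : T f x - T g x = u * (Fcost S (wdAux ν g) x - Fcost S (wdAux ν f) x) /
        (Fcost S (wdAux ν f) x * Fcost S (wdAux ν g) x) := by
      rw [hTdef]
      field_simp
    rw [heq, abs_div, abs_mul, abs_of_pos (mul_pos hFpos hGpos)]
    have hnum : |u| * |Fcost S (wdAux ν g) x - Fcost S (wdAux ν f) x| ≤ u * (Λ * D) := by
      rw [abs_of_nonneg hu0]
      refine mul_le_mul_of_nonneg_left ?_ hu0
      rw [abs_sub_comm]; exact hFd
    have hden : c * c ≤ Fcost S (wdAux ν f) x * Fcost S (wdAux ν g) x :=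
      mul_le_mul hFf.1 hFg.1 hc0.le (le_trans hc0.le hFf.1)
    calc |u| * |Fcost S (wdAux ν g) x - Fcost S (wdAux ν f) x| /
          (Fcost S (wdAux ν f) x * Fcost S (wdAux ν g) x)
        ≤ u * (Λ * D) / (c * c) :=
          div_le_div₀ (by positivity) hnum (by positivity) hden
      _ ≤ D / 2 := by
          rw [div_le_div_iff₀ (by positivity) (by norm_num)]
          nlinarith [mul_le_mul_of_nonneg_right huΛ hD0, mul_nonneg hu0 hD0]
  -- the iteration sequence
  set seq : ℕ → M → ℝ := fun n => T^[n] (fun _ => 0) with hseqdef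
  have hGood : ∀ n, Measurable (seq n) ∧ (∀ x, 0 ≤ seq n x) ∧ (∀ x, seq n x ≤ H) := by
    intro n
    induction n with
    | zero => exact ⟨measurable_const, fun x => le_refl 0, fun x => hH0.le⟩
    | succ n ih =>
      have : seq (n + 1) = T (seq n) := Function.iterate_succ_apply' T n _
      rw [this]
      exact hTGood (seq n) ih.1 ih.2.1 ih.2.2
  have hsucc : ∀ n, seq (n + 1) = T (seq n) := fun n => Function.iterate_succ_apply' T n _
  have hstep : ∀ n x, |seq (n + 1) x - seq n x| ≤ H * (1 / 2) ^ n := by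
    intro n
    induction n with
    | zero =>
      intro x
      have h0 : seq 0 x = 0 := rfl
      rw [h0, sub_zero, abs_of_nonneg ((hGood 1).2.1 x)]
      simpa using (hGood 1).2.2 x
    | succ n ih =>
      intro x
      have hD0 : (0:ℝ) ≤ H * (1 / 2) ^ n := by positivity
      have hD2H : H * (1 / 2) ^ n ≤ 2 * H := by
        have : (1 / 2 : ℝ) ^ n ≤ 1 := pow_le_one₀ (by norm_num) (by norm_num)
        nlinarith
      have := hTcontr (seq (n + 1)) (seq n) (hGood (n + 1)).1 (hGood n).1
        (hGood (n + 1)).2.1 (hGood (n + 1)).2.2 (hGood n).2.1 (hGood n).2.2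
        (H * (1 / 2) ^ n) hD0 hD2H ih x
      rw [hsucc (n + 1), hsucc n] at *
      calc |T (T (seq n)) x - T (seq n) x| ≤ H * (1 / 2) ^ n / 2 := this
        _ = H * (1 / 2) ^ (n + 1) := by rw [pow_succ]; ring
  have hsep : ∀ n m x, |seq (n + m) x - seq n x| ≤ 2 * H * (1 / 2) ^ n * (1 - (1 / 2) ^ m) := by
    intro n m
    induction m with
    | zero => intro x; simp
    | succ m ih =>
      intro x
      calc |seq (n + m + 1) x - seq n x|
          ≤ |seq (n + m + 1) x - seq (n + m) x| + |seq (n + m) x - seq n x| :=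
            abs_sub_le _ _ _
        _ ≤ H * (1 / 2) ^ (n + m) + 2 * H * (1 / 2) ^ n * (1 - (1 / 2) ^ m) :=
            add_le_add (hstep (n + m) x) (ih x)
        _ = 2 * H * (1 / 2) ^ n * (1 - (1 / 2) ^ (m + 1)) := by
            rw [pow_add, pow_succ]; ring
  have hsep' : ∀ n m x, |seq (n + m) x - seq n x| ≤ 2 * H * (1 / 2) ^ n := by
    intro n m x
    refine le_trans (hsep n m x) ?_
    have h1 : (0:ℝ) ≤ 2 * H * (1 / 2) ^ n := by positivity
    have h2 : 1 - (1 / 2 : ℝ) ^ m ≤ 1 := by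
      have : (0:ℝ) ≤ (1 / 2 : ℝ) ^ m := by positivity
      linarith
    nlinarith
  -- convergence
  have hcau : ∀ x, ∃ lx, Tendsto (fun n => seq n x) atTop (nhds lx) := by
    intro x
    refine cauchySeq_tendsto_of_complete (cauchySeq_of_le_geometric (1 / 2) H (by norm_num)
      fun n => ?_)
    rw [Real.dist_eq, abs_sub_comm]
    exact hstep n x
  choose l hl using hcau
  have hlm : Measurable l :=
    measurable_of_tendsto_metrizable (fun n => (hGood n).1) (tendsto_pi_nhds.2 hl)
  have hl0 : ∀ x, 0 ≤ l x := fun x =>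
    ge_of_tendsto (hl x) (Filter.Eventually.of_forall fun n => (hGood n).2.1 x)
  have hlH : ∀ x, l x ≤ H := fun x =>
    le_of_tendsto (hl x) (Filter.Eventually.of_forall fun n => (hGood n).2.2 x)
  have hunif : ∀ n x, |l x - seq n x| ≤ 2 * H * (1 / 2) ^ n := by
    intro n x
    have h1 : Tendsto (fun m => seq (m + n) x) atTop (nhds (l x)) :=
      (hl x).comp (tendsto_add_atTop_nat n)
    have h2 : Tendsto (fun m => |seq (m + n) x - seq n x|) atTop
        (nhds (|l x - seq n x|)) := (h1.sub tendsto_const_nhds).abs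
    refine le_of_tendsto h2 (Filter.Eventually.of_forall fun m => ?_)
    rw [Nat.add_comm m n]
    exact hsep' n m x
  -- fixed point
  have hfix : ∀ x, T l x = l x := by
    intro x
    have hbnd : ∀ n : ℕ, |T l x - l x| ≤ 2 * (H * (1 / 2) ^ n) := by
      intro n
      have hD0 : (0:ℝ) ≤ 2 * H * (1 / 2) ^ n := by positivity
      have hD2H : 2 * H * (1 / 2) ^ n ≤ 2 * H := by
        have h3 : (1 / 2 : ℝ) ^ n ≤ 1 := pow_le_one₀ (by norm_num) (by norm_num)
        nlinarith
      have h1 : |T l x - T (seq n) x| ≤ 2 * H * (1 / 2) ^ n / 2 :=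
        hTcontr l (seq n) hlm (hGood n).1 hl0 hlH (hGood n).2.1 (hGood n).2.2
          (2 * H * (1 / 2) ^ n) hD0 hD2H (fun y => hunif n y) x
      have h2 : |seq (n + 1) x - l x| ≤ 2 * H * (1 / 2) ^ (n + 1) := by
        rw [abs_sub_comm]; exact hunif (n + 1) x
      have h3 : |T l x - l x| ≤ |T l x - T (seq n) x| + |seq (n + 1) x - l x| := by
        rw [hsucc n] at *
        exact abs_sub_le _ _ _
      calc |T l x - l x| ≤ 2 * H * (1 / 2) ^ n / 2 + 2 * H * (1 / 2) ^ (n + 1) :=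
            le_trans h3 (add_le_add h1 h2)
        _ = 2 * (H * (1 / 2) ^ n) := by rw [pow_succ]; ring
    have h0 : Tendsto (fun n : ℕ => 2 * (H * (1 / 2 : ℝ) ^ n)) atTop (nhds 0) := by
      have hp : Tendsto (fun n : ℕ => (1 / 2 : ℝ) ^ n) atTop (nhds 0) :=
        tendsto_pow_atTop_nhds_zero_of_lt_one (by norm_num) (by norm_num)
      have := (hp.const_mul H).const_mul 2
      simpa using this
    have hle0 : |T l x - l x| ≤ 0 :=
      ge_of_tendsto h0 (Filter.Eventually.of_forall hbnd)
    have := abs_nonpos_iff.1 hle0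
    linarith [sub_eq_zero.1 this, le_refl (l x)]
  -- conclusion
  haveI : IsFiniteMeasure (wdAux ν l) := isFiniteMeasure_withDensity_ofReal ν hlH
  refine ⟨wdAux ν l, inferInstance, fun A hA => ?_⟩
  have hFb := hFbound l hlm hl0 hlH
  have hFmeas : Measurable fun x => Fcost S (wdAux ν l) x :=
    Fcost_measurable (wdAux ν l) hSm hmono
  have hkey : ∀ x, l x * Fcost S (wdAux ν l) x = u := by
    intro x
    have h1 : u / Fcost S (wdAux ν l) x = l x := hfix x
    have hFpos : 0 < Fcost S (wdAux ν l) x := lt_of_lt_of_le hc0 (hFb x).1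
    field_simp at h1
    linarith [h1]
  have hDop : (Dop S (wdAux ν l)) A = ENNReal.ofReal u * ν A := by
    rw [Dop]
    rw [withDensity_apply _ hA]
    have hwd : wdAux ν l = ν.withDensity fun y => ENNReal.ofReal (l y) := rfl
    have hFmeas' : Measurable fun x =>
        ENNReal.ofReal (Fcost S (ν.withDensity fun y => ENNReal.ofReal (l y)) x) :=
      hFmeas.ennreal_ofReal
    rw [hwd, setLIntegral_withDensity_eq_setLIntegral_mul ν hlm.ennreal_ofReal hFmeas' hA]
    have hpt : ∀ x, ((fun y => ENNReal.ofReal (l y)) *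
        fun x => ENNReal.ofReal (Fcost S (ν.withDensity fun y => ENNReal.ofReal (l y)) x)) x
        = ENNReal.ofReal u := by
      intro x
      have : (ENNReal.ofReal (l x)) * ENNReal.ofReal
          (Fcost S (ν.withDensity fun y => ENNReal.ofReal (l y)) x) = ENNReal.ofReal u := by
        rw [← ENNReal.ofReal_mul (hl0 x), ← hwd, hkey x]
      exact this
    rw [setLIntegral_congr_fun hA (fun x _ => hpt x), setLIntegral_const]
  rw [hDop, ENNReal.toReal_mul, ENNReal.toReal_ofReal hu0]

end MSEW
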